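/- arXiv:1812.00803 — 3 statements merged into one kernel-verified Lean document; each statement's English description precedes it below -/
import Mathlib

section
/- Every finite lattice L is isomorphic to the subalgebra lattice of some algebraic structure on the underlying set of L. Concretely, taking as operations the nullary constant 0 = ⊥ together with, for each finite B ⊆ L and each b ≤ ⋁B, the |B|-ary operation f_{B,b} defined by f_{B,b}(a₁,…,aₙ) = b if {a₁,…,aₙ} = B and f_{B,b}(a₁,…,aₙ) = a₁ otherwise, the subsets of L closed under all these operations are exactly the principal down-sets of L, so the subalgebra lattice is isomorphic to L. -/
def fBF {L : Type*} [DecidableEq L] (B : Finset L) (b : L) (a : Fin B.card → L) : L :=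
  if Finset.image a Finset.univ = B then b
  else if h : 0 < B.card then a ⟨0, h⟩ else b

def ClosedBF {L : Type*} [Lattice L] [OrderBot L] [DecidableEq L] (S : Set L) : Prop :=
  ∀ (B : Finset L) (b : L), b ≤ B.sup id →
    ∀ a : Fin B.card → L, (∀ j, a j ∈ S) → fBF B b a ∈ S

lemma closedBF_principal {L : Type*} [Lattice L] [OrderBot L] [DecidableEq L] (x : L) :
    ClosedBF {a : L | a ≤ x} := by
  intro B b hb a ha
  unfold fBF
  split_ifs with h1 h2
  · have hBx : B.sup id ≤ x := by
      apply Finset.sup_le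
      intro c hc
      rw [← h1, Finset.mem_image] at hc
      obtain ⟨i, _, rfl⟩ := hc
      exact ha i
    exact le_trans hb hBx
  · exact ha _
  · have : B = ∅ := Finset.card_eq_zero.mp (Nat.eq_zero_of_not_pos h2)
    subst this
    simp only [Finset.sup_empty, le_bot_iff] at hb
    simp [Set.mem_setOf_eq, hb]

lemma sup_principal_toFinset {L : Type*} [Lattice L] [OrderBot L] [Fintype L]
    [DecidableEq L] (x : L) : (Set.toFinite {a : L | a ≤ x}).toFinset.sup id = x := by
  apply le_antisymm
  · exact Finset.sup_le fun c hc => by simpa using (Set.Finite.mem_toFinset _).mp hc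
  · exact Finset.le_sup (f := id) ((Set.Finite.mem_toFinset _).mpr (le_refl x))

lemma closedBF_iff {L : Type*} [Lattice L] [OrderBot L] [Fintype L] [DecidableEq L]
    (S : Set L) : ClosedBF S ↔ ∃ x : L, S = {a : L | a ≤ x} := by
  constructor
  · intro hS
    refine ⟨(Set.toFinite S).toFinset.sup id, ?_⟩
    ext a
    simp only [Set.mem_setOf_eq]
    constructor
    · intro haS
      exact Finset.le_sup (f := id) ((Set.Finite.mem_toFinset _).mpr haS)
    · intro hax
      set B : Finset L := (Set.toFinite S).toFinset with hB
      set f : Fin B.card → L := fun i => ((B.equivFin.symm i : B) : L) with hf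
      have himg : Finset.image f Finset.univ = B := by
        ext c
        simp only [Finset.mem_image, Finset.mem_univ, true_and]
        constructor
        · rintro ⟨i, rfl⟩
          exact (B.equivFin.symm i).2
        · intro hc
          exact ⟨B.equivFin ⟨c, hc⟩, by simp [hf]⟩
      have := hS B a hax f (fun j => (Set.Finite.mem_toFinset _).mp (B.equivFin.symm j).2)
      rwa [fBF, if_pos himg] at this
  · rintro ⟨x, rfl⟩
    exact closedBF_principal x

/-- Birkhoff–Frink: for a finite lattice `L`, the subsets closed under all the operations
`f_{B,b}` (`B ⊆ L` finite, `b ≤ ⋁ B`) are exactly the principal down-sets of `L`, and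
hence the subalgebra lattice of this algebraic structure is isomorphic to `L`. -/
theorem birkhoff_frink_finite_lattice {L : Type*} [Lattice L] [OrderBot L] [Fintype L]
    [DecidableEq L] :
    {S : Set L | ClosedBF S} = {S : Set L | ∃ x : L, S = {a : L | a ≤ x}} ∧
    Nonempty (L ≃o {S : Set L // ClosedBF S}) := by
  constructor
  · ext S
    exact closedBF_iff S
  · refine ⟨{
      toFun := fun x => ⟨{a : L | a ≤ x}, closedBF_principal x⟩
      invFun := fun S => (Set.toFinite S.1).toFinset.sup id
      left_inv := ?_
      right_inv := ?_
      map_rel_iff' := ?_ }⟩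
    · intro x
      exact sup_principal_toFinset x
    · rintro ⟨S, hS⟩
      obtain ⟨x, rfl⟩ := (closedBF_iff S).mp hS
      simp [sup_principal_toFinset x]
    · intro x y
      simp only [Equiv.coe_fn_mk, Subtype.mk_le_mk, Set.le_eq_subset, Set.setOf_subset_setOf]
      exact ⟨fun h => h x le_rfl, fun h a ha => le_trans ha h⟩
end

section
/- Let L = {0, a₁, …, a_{n-2}, 1} be a chain of n ≥ 2 elements (totally ordered: 0 < a₁ < ⋯ < a_{n-2} < 1). Equip L with the n−1 operations: the nullary constant 0, and for each covering pair y ⋖ x (x covers y) the unary operation g_x(z) = y if z = x and g_x(z) = z otherwise. Then the subsets of L closed under these operations are exactly the principal down-sets of L, hence the subalgebra lattice of this structure is isomorphic to L. -/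
/-- Closure under the operations for a chain: the nullary constant `⊥` and, for each
covering pair `y ⋖ x`, the unary step-down operation sending `x` to `y` and fixing
everything else. -/
def ChainClosed {L : Type*} [LinearOrder L] [OrderBot L] [DecidableEq L] (S : Set L) : Prop :=
  (⊥ : L) ∈ S ∧ ∀ x y : L, y ⋖ x → ∀ z ∈ S, (if z = x then y else z) ∈ S

private lemma chainClosed_downset {L : Type*} [LinearOrder L] [OrderBot L] [Fintype L]
    [DecidableEq L] {S : Set L} (hS : ChainClosed S) :
    ∀ z ∈ S, ∀ y, y ≤ z → y ∈ S := by
  intro z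
  induction z using WellFoundedLT.induction with
  | ind z ih =>
    intro hz y hy
    rcases eq_or_lt_of_le hy with rfl | hlt
    · exact hz
    · -- find w with y ≤ w ⋖ z
      have hne : ({w : L | y ≤ w ∧ w < z} : Set L).toFinset.Nonempty := by
        refine ⟨y, ?_⟩
        simp [hlt]
      set T := ({w : L | y ≤ w ∧ w < z} : Set L).toFinset
      obtain ⟨w, hwT, hwmax⟩ := T.exists_max_image id hne
      have hw : y ≤ w ∧ w < z := by simpa [T] using hwT
      have hcov : w ⋖ z := by
        refine ⟨hw.2, ?_⟩
        intro u hu huz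
        have : u ∈ T := by simp [T]; exact ⟨le_trans hw.1 hu.le, huz⟩
        exact absurd (hwmax u this) (not_le.mpr hu)
      have hwS : w ∈ S := by
        have := hS.2 z w hcov z hz
        simpa using this
      exact ih w hw.2 hwS y hw.1

private lemma chainClosed_iff {L : Type*} [LinearOrder L] [OrderBot L] [Fintype L]
    [DecidableEq L] (S : Set L) :
    ChainClosed S ↔ ∃ x : L, S = {a : L | a ≤ x} := by
  constructor
  · intro hS
    have hne : S.toFinite.toFinset.Nonempty := ⟨⊥, by simpa using hS.1⟩
    obtain ⟨m, hmS, hmax⟩ := S.toFinite.toFinset.exists_max_image id hne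
    refine ⟨m, ?_⟩
    ext a
    constructor
    · intro ha
      exact hmax a (by simpa using ha)
    · intro ha
      exact chainClosed_downset hS m (by simpa using hmS) a ha
  · rintro ⟨x, rfl⟩
    refine ⟨bot_le, ?_⟩
    intro u v huv z hz
    by_cases h : z = u
    · subst h
      simpa using le_trans huv.1.le hz
    · simpa [h] using hz

/-- For a finite chain `L` with at least two elements, equipped with the constant `⊥` and
the unary step-down operations for covering pairs, the closed subsets are exactly the
principal down-sets, and hence the subalgebra lattice is isomorphic to `L`. -/
theorem chain_lattice_representation {L : Type*} [LinearOrder L] [OrderBot L] [Fintype L]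
    [DecidableEq L] (hcard : 2 ≤ Fintype.card L) :
    {S : Set L | ChainClosed S} = {S : Set L | ∃ x : L, S = {a : L | a ≤ x}} ∧
    Nonempty (L ≃o {S : Set L // ChainClosed S}) := by
  constructor
  · ext S
    simpa using chainClosed_iff S
  · have hclosed : ∀ x : L, ChainClosed {a : L | a ≤ x} := fun x =>
      (chainClosed_iff _).mpr ⟨x, rfl⟩
    have hmono : StrictMono (fun x : L => (⟨{a : L | a ≤ x}, hclosed x⟩ :
        {S : Set L // ChainClosed S})) := by
      intro a b hab
      constructor
      · intro z hz
        exact le_trans hz hab.le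
      · intro h
        exact absurd (h (le_refl b)) (not_le.mpr hab)
    have hsurj : Function.Surjective (fun x : L => (⟨{a : L | a ≤ x}, hclosed x⟩ :
        {S : Set L // ChainClosed S})) := by
      rintro ⟨S, hS⟩
      obtain ⟨x, rfl⟩ := (chainClosed_iff S).mp hS
      exact ⟨x, rfl⟩
    exact ⟨StrictMono.orderIsoOfSurjective _ hmono hsurj⟩
end

section
/- Let S be a finite set with n elements and equip the power set P(S) with the following operations: the nullary constant ∅; for each X ⊆ S with |X| ≥ 2 and each x ∈ X, the unary operation sending X to {x} (identity elsewhere); and for each X = {x₁,…,x_k} ⊆ S with k = |X| ≥ 2, the k-ary operation sending ({x₁},…,{x_k}) (in any order) to X (and first argument otherwise). Then the subsets of P(S) closed under these operations are exactly the principal down-sets {Y : Y ⊆ X} for X ⊆ S, so the subalgebra lattice of this structure is isomorphic to P(S). -/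
open scoped Classical in
/-- Closure under the operations for the power set lattice of a finite set `S`:
the nullary constant `∅`; for each `X ⊆ S` with `|X| ≥ 2` and each `x ∈ X` the unary
operation sending `X` to `{x}` (identity elsewhere); and for each `X ⊆ S` with
`k = |X| ≥ 2` the `k`-ary operation sending any tuple whose set of arguments is exactly
the set of singletons of elements of `X` to `X` (and to its first argument otherwise). -/
def PowersetClosed {S : Type*} [Fintype S] [DecidableEq S] (C : Set (Finset S)) : Prop :=
  (∅ : Finset S) ∈ C ∧
  (∀ X : Finset S, 2 ≤ X.card → ∀ x ∈ X, ∀ A ∈ C,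
    (if A = X then ({x} : Finset S) else A) ∈ C) ∧
  (∀ (X : Finset S) (h : 2 ≤ X.card), ∀ A : Fin X.card → Finset S, (∀ j, A j ∈ C) →
    (if Set.range A = (fun x => ({x} : Finset S)) '' (X : Set S) then X
     else A ⟨0, by omega⟩) ∈ C)

lemma psc_singleton {S : Type*} [Fintype S] [DecidableEq S] {C : Set (Finset S)}
    (hC : PowersetClosed C) {A : Finset S} (hA : A ∈ C) {x : S} (hx : x ∈ A) :
    ({x} : Finset S) ∈ C := by
  by_cases h2 : 2 ≤ A.card
  · have := hC.2.1 A h2 x hx A hA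
    simpa using this
  · have h1 : A.card = 1 := by
      have : 1 ≤ A.card := Finset.card_pos.2 ⟨x, hx⟩
      omega
    obtain ⟨y, hy⟩ := Finset.card_eq_one.1 h1
    subst hy
    simp only [Finset.mem_singleton] at hx
    subst hx
    exact hA

lemma psc_mem {S : Type*} [Fintype S] [DecidableEq S] {C : Set (Finset S)}
    (hC : PowersetClosed C) {X : Finset S} (hX : ∀ x ∈ X, ({x} : Finset S) ∈ C) :
    X ∈ C := by
  by_cases h2 : 2 ≤ X.card
  · set A : Fin X.card → Finset S := fun j => ({(X.equivFin.symm j : S)} : Finset S) with hA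
    have hmem : ∀ j, A j ∈ C := fun j => hX _ (X.equivFin.symm j).2
    have hr : Set.range A = (fun x => ({x} : Finset S)) '' (X : Set S) := by
      ext B
      constructor
      · rintro ⟨j, rfl⟩
        exact ⟨_, (X.equivFin.symm j).2, rfl⟩
      · rintro ⟨x, hx, rfl⟩
        exact ⟨X.equivFin ⟨x, hx⟩, by simp [A]⟩
    have := hC.2.2 X h2 A hmem
    rwa [if_pos hr] at this
  · interval_cases h : X.card
    · rw [Finset.card_eq_zero.1 h]; exact hC.1
    · obtain ⟨y, hy⟩ := Finset.card_eq_one.1 h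
      subst hy
      exact hX y (by simp)

lemma psc_principal {S : Type*} [Fintype S] [DecidableEq S] (X : Finset S) :
    PowersetClosed {Y : Finset S | Y ⊆ X} := by
  refine ⟨by simp, ?_, ?_⟩
  · intro Z h2 x hx A hA
    split
    · next h => subst h; simpa using hA hx
    · exact hA
  · intro Z h2 A hA
    split
    · next h =>
      intro x hx
      have : ({x} : Finset S) ∈ Set.range A := by
        rw [h]; exact ⟨x, hx, rfl⟩
      obtain ⟨j, hj⟩ := this
      have := hA j
      rw [hj] at this
      exact this (Finset.mem_singleton_self x)
    · exact hA _

open Classical in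
lemma psc_eq {S : Type*} [Fintype S] [DecidableEq S] {C : Set (Finset S)}
    (hC : PowersetClosed C) :
    C = {Y : Finset S | Y ⊆ Finset.univ.filter fun s => ({s} : Finset S) ∈ C} := by
  ext Y
  simp only [Set.mem_setOf_eq]
  constructor
  · intro hY x hx
    simp only [Finset.mem_filter, Finset.mem_univ, true_and]
    exact psc_singleton hC hY hx
  · intro hY
    refine psc_mem hC fun x hx => ?_
    have := hY hx
    simpa using this

/-- For the power set lattice of a finite set `S` equipped with the operations described
in `PowersetClosed`, the closed families are exactly the principal down-sets
`{Y | Y ⊆ X}`, and hence the subalgebra lattice of this structure is isomorphic to the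
power set lattice of `S`. -/
theorem powerset_lattice_representation {S : Type*} [Fintype S] [DecidableEq S] :
    {C : Set (Finset S) | PowersetClosed C}
        = {C : Set (Finset S) | ∃ X : Finset S, C = {Y : Finset S | Y ⊆ X}} ∧
    Nonempty (Finset S ≃o {C : Set (Finset S) // PowersetClosed C}) := by
  classical
  constructor
  · ext C
    simp only [Set.mem_setOf_eq]
    constructor
    · intro hC
      exact ⟨_, psc_eq hC⟩
    · rintro ⟨X, rfl⟩
      exact psc_principal X
  · refine ⟨⟨⟨fun X => ⟨{Y | Y ⊆ X}, psc_principal X⟩,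
      fun C => Finset.univ.filter fun s => ({s} : Finset S) ∈ C.1, ?_, ?_⟩, ?_⟩⟩
    · intro X
      ext s
      simp only [Finset.mem_filter, Finset.mem_univ, true_and, Set.mem_setOf_eq,
        Finset.singleton_subset_iff]
    · rintro ⟨C, hC⟩
      exact Subtype.ext (psc_eq hC).symm
    · intro X X'
      constructor
      · intro h
        have : X ∈ ({Y : Finset S | Y ⊆ X'}) := h (by exact Set.mem_setOf_eq ▸ le_refl X)
        exact this
      · intro h Y hY
        exact Set.mem_setOf_eq ▸ (hY.trans h)
end
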